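/- arXiv:1609.06478 — 3 statements merged into one kernel-verified Lean document; each statement's English description precedes it below -/
import Mathlib

section
/- Let (A^•, 0) be a nonnegatively graded differential graded algebra over ℂ with zero differential and finite-dimensional graded pieces, and let η ∈ A^1. Form the cochain complex A^•(η) over R̂ = ℂ[[s]] with terms A^i ⊗_ℂ R̂ and differential given by ω ⊗ 1 ↦ (ω ∧ η) ⊗ s. Then for every i, the torsion submodule of H^i(A^•(η)) is annihilated by s, i.e. all cohomology modules are direct sums of a free module and copies of ℂ[[s]]/(s). -/
set_option synthInstance.maxHeartbeats 1000000
set_option maxHeartbeats 1000000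

open TensorProduct

/-- Multiplication by a degree-one element `η` as a `ℂ`-linear map `A^i → A^{i+1}` in a
graded algebra. -/
noncomputable def mulEta {A : Type*} [Ring A] [Algebra ℂ A]
    (𝒜 : ℕ → Submodule ℂ A) [GradedAlgebra 𝒜] (η : ↥(𝒜 1)) (i : ℕ) :
    ↥(𝒜 i) →ₗ[ℂ] ↥(𝒜 (i + 1)) where
  toFun x := ⟨(x : A) * (η : A), SetLike.mul_mem_graded x.2 η.2⟩
  map_add' x y := by ext; simp [add_mul]
  map_smul' c x := by ext; simp [smul_mul_assoc]

/-- The differential of the thickened complex `A^•(η, ∞)` over `R̂ = ℂ[[s]]`: on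
`A^i ⊗ ℂ[[s]]` it is `ω ⊗ 1 ↦ (ω ∧ η) ⊗ s`, i.e. `s` times the base change of
multiplication by `η`. -/
noncomputable def thickenedDiff {A : Type*} [Ring A] [Algebra ℂ A]
    (𝒜 : ℕ → Submodule ℂ A) [GradedAlgebra 𝒜] (η : ↥(𝒜 1)) (i : ℕ) :
    ((PowerSeries ℂ) ⊗[ℂ] ↥(𝒜 i)) →ₗ[PowerSeries ℂ] ((PowerSeries ℂ) ⊗[ℂ] ↥(𝒜 (i + 1))) :=
  (PowerSeries.X : PowerSeries ℂ) • LinearMap.baseChange (PowerSeries ℂ) (mulEta 𝒜 η i)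

/-! The differential is `s • (d ⊗ ℂ[[s]])` for the `ℂ`-linear map `d = (· ∧ η)`. Over a field
`d` has a quasi-inverse `g` with `d ∘ g ∘ d = d`, so `(d ∘ g) ⊗ ℂ[[s]]` fixes the range of
`d ⊗ ℂ[[s]]`; since `A^{i+1} ⊗ ℂ[[s]]` is torsion-free, that range is saturated. Hence a cocycle
which is torsion modulo coboundaries lies in the range of `d ⊗ ℂ[[s]]`, and `s` times it is a
coboundary. In degree `0`, `A^0 ⊗ ℂ[[s]]` is itself torsion-free. -/

theorem LinearMap.exists_comp_comp_eq_self {K V W : Type*} [DivisionRing K]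
    [AddCommGroup V] [Module K V] [AddCommGroup W] [Module K W] (f : V →ₗ[K] W) :
    ∃ g : W →ₗ[K] V, f ∘ₗ g ∘ₗ f = f := by
  obtain ⟨r, hr⟩ := f.rangeRestrict.exists_rightInverse_of_surjective f.range_rangeRestrict
  obtain ⟨l, hl⟩ := (range f).subtype.exists_leftInverse_of_injective (range f).ker_subtype
  refine ⟨r ∘ₗ l, ?_⟩
  calc f ∘ₗ (r ∘ₗ l) ∘ₗ f
      = (range f).subtype ∘ₗ (f.rangeRestrict ∘ₗ r) ∘ₗ (l ∘ₗ (range f).subtype) ∘ₗ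
          f.rangeRestrict := rfl
    _ = f := by rw [hr, hl]; rfl

theorem LinearMap.mem_range_of_smul_mem_of_comp_comp_eq_self {R M N : Type*} [Semiring R]
    [IsCancelMulZero R] [AddCommGroup M] [Module R M] [AddCommGroup N] [Module R N]
    [Module.IsTorsionFree R N] {f : M →ₗ[R] N} {g : N →ₗ[R] M} (hfgf : f ∘ₗ g ∘ₗ f = f)
    {c : R} (hc : c ≠ 0) {z : N} (hz : c • z ∈ range f) : z ∈ range f := by
  obtain ⟨u, hu⟩ := hz
  have hfg : f (g (c • z)) = c • z := by rw [← hu]; exact congr($hfgf u)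
  have hsmul : c • (f (g z) - z) = 0 := by rw [smul_sub, ← map_smul, ← map_smul, hfg, sub_self]
  exact ⟨g z, sub_eq_zero.mp ((smul_eq_zero.mp hsmul).resolve_left hc)⟩

theorem LinearMap.mem_range_baseChange_of_smul_mem {K R V W : Type*} [Field K] [CommRing R]
    [IsCancelMulZero R] [Algebra K R] [AddCommGroup V] [Module K V] [AddCommGroup W] [Module K W]
    (f : V →ₗ[K] W) {c : R} (hc : c ≠ 0) {z : R ⊗[K] W}
    (hz : c • z ∈ range (f.baseChange R)) : z ∈ range (f.baseChange R) := by
  obtain ⟨g, hfgf⟩ := f.exists_comp_comp_eq_self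
  refine mem_range_of_smul_mem_of_comp_comp_eq_self (g := g.baseChange R) ?_ hc hz
  rw [← baseChange_comp, ← baseChange_comp, hfgf]

theorem formal_thickened_complex_semisimple_general
    (A : Type) [Ring A] [Algebra ℂ A] (𝒜 : ℕ → Submodule ℂ A) [GradedAlgebra 𝒜]
    (η : ↥(𝒜 1)) :
    (∀ z ∈ LinearMap.ker (thickenedDiff 𝒜 η 0),
      (∃ c : PowerSeries ℂ, c ≠ 0 ∧ c • z = 0) →
        (PowerSeries.X : PowerSeries ℂ) • z = 0) ∧
    ∀ i : ℕ, ∀ z ∈ LinearMap.ker (thickenedDiff 𝒜 η (i + 1)),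
      (∃ c : PowerSeries ℂ, c ≠ 0 ∧ c • z ∈ LinearMap.range (thickenedDiff 𝒜 η i)) →
        (PowerSeries.X : PowerSeries ℂ) • z ∈ LinearMap.range (thickenedDiff 𝒜 η i) := by
  constructor
  · rintro z - ⟨c, hc, hcz⟩
    rw [(smul_eq_zero.mp hcz).resolve_left hc, smul_zero]
  · rintro i z - ⟨c, hc, hcz⟩
    obtain ⟨v, rfl⟩ := (mulEta 𝒜 η i).mem_range_baseChange_of_smul_mem hc
      (LinearMap.range_smul_le_range _ PowerSeries.X hcz)
    exact ⟨v, rfl⟩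

/-- For a nonnegatively graded, graded-commutative differential graded `ℂ`-algebra with zero
differential and finite-dimensional graded pieces, and `η ∈ A^1`, each cohomology module of
the complex `A^•(η, ∞)` over `ℂ[[s]]` has its torsion annihilated by `s` (so it is a direct
sum of a free module and copies of `ℂ[[s]]/(s)`): in degree `0` a torsion element `z` of
`H^0 = ker` satisfies `s • z = 0`, and in degree `i+1` a cocycle `z` that is torsion modulo
coboundaries satisfies `s • z ∈ im`. -/
theorem formal_thickened_complex_semisimple
    (A : Type) [Ring A] [Algebra ℂ A] (𝒜 : ℕ → Submodule ℂ A) [GradedAlgebra 𝒜]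
    [∀ i, FiniteDimensional ℂ ↥(𝒜 i)]
    (hcomm : ∀ (i j : ℕ) (x : ↥(𝒜 i)) (y : ↥(𝒜 j)),
      (x : A) * (y : A) = ((-1 : ℂ) ^ (i * j)) • ((y : A) * (x : A)))
    (η : ↥(𝒜 1)) :
    (∀ z ∈ LinearMap.ker (thickenedDiff 𝒜 η 0),
      (∃ c : PowerSeries ℂ, c ≠ 0 ∧ c • z = 0) →
        (PowerSeries.X : PowerSeries ℂ) • z = 0) ∧
    ∀ i : ℕ, ∀ z ∈ LinearMap.ker (thickenedDiff 𝒜 η (i + 1)),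
      (∃ c : PowerSeries ℂ, c ≠ 0 ∧ c • z ∈ LinearMap.range (thickenedDiff 𝒜 η i)) →
        (PowerSeries.X : PowerSeries ℂ) • z ∈ LinearMap.range (thickenedDiff 𝒜 η i) :=
  formal_thickened_complex_semisimple_general A 𝒜 η
end

section
/- Equip ℂ[[s]] with the s-adic grading (deg s = 1). Let C• be a complex of finitely generated free graded ℂ[[s]]-modules generated in degree zero, whose differentials are graded homomorphisms of degree +1 (i.e., each differential is s times a matrix with constant entries). Then the torsion submodule of each cohomology module of C• is annihilated by s. -/
/-!
Write the differential as `s • L` with `L` the constant matrix `A` viewed over `ℂ⟦s⟧`.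
A vector of power series lies in the range of `L` iff each of its coefficient vectors lies in
the range of `A`, so that range is saturated: `s ^ k • z ∈ range L` forces `z ∈ range L`.
If `c • z = s • L w` with `c = s ^ k * u`, `u` a unit, then `s ^ k • z ∈ range L`,
hence `z ∈ range L` and `s • z ∈ range (s • L)`.
-/

namespace PowerSeries

variable {R : Type*} [CommRing R] {m p : ℕ}

lemma coeff_toLin'_map_C_apply (A : Matrix (Fin m) (Fin p) R) (w : Fin p → R⟦X⟧) (k : ℕ)
    (j : Fin m) :
    coeff k (Matrix.toLin' (A.map C) w j) = Matrix.toLin' A (fun l => coeff k (w l)) j := by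
  simp [Matrix.toLin'_apply, Matrix.mulVec, dotProduct, map_sum, coeff_C_mul]

lemma mem_range_toLin'_map_C_iff (A : Matrix (Fin m) (Fin p) R) (z : Fin m → R⟦X⟧) :
    z ∈ LinearMap.range (Matrix.toLin' (A.map C)) ↔
      ∀ k, (fun j => coeff k (z j)) ∈ LinearMap.range (Matrix.toLin' A) := by
  constructor
  · rintro ⟨w, rfl⟩ k
    exact ⟨fun l => coeff k (w l), funext fun j => (coeff_toLin'_map_C_apply A w k j).symm⟩
  · intro h
    choose y hy using h
    refine ⟨fun l => mk fun k => y k l, funext fun j => ext fun k => ?_⟩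
    rw [coeff_toLin'_map_C_apply]
    simpa using congrFun (hy k) j

lemma mem_range_toLin'_map_C_of_X_pow_smul_mem {A : Matrix (Fin m) (Fin p) R}
    {z : Fin m → R⟦X⟧} {k : ℕ}
    (h : (X ^ k : R⟦X⟧) • z ∈ LinearMap.range (Matrix.toLin' (A.map C))) :
    z ∈ LinearMap.range (Matrix.toLin' (A.map C)) := by
  rw [mem_range_toLin'_map_C_iff] at h ⊢
  intro j
  simpa using h (j + k)

end PowerSeries

open PowerSeries

theorem graded_degree_one_complex_semisimple_cohomology_general
    (n : ℤ → ℕ)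
    (d : ∀ i : ℤ, (Fin (n i) → PowerSeries ℂ) →ₗ[PowerSeries ℂ] (Fin (n (i + 1)) → PowerSeries ℂ))
    (hgraded : ∀ i : ℤ, ∃ A : Matrix (Fin (n (i + 1))) (Fin (n i)) ℂ,
      d i = (PowerSeries.X : PowerSeries ℂ) • Matrix.toLin' (A.map (PowerSeries.C : ℂ →+* PowerSeries ℂ))) :
    ∀ i : ℤ, ∀ z ∈ LinearMap.ker (d (i + 1)),
      (∃ c : PowerSeries ℂ, c ≠ 0 ∧ c • z ∈ LinearMap.range (d i)) →
        (PowerSeries.X : PowerSeries ℂ) • z ∈ LinearMap.range (d i) := by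
  rintro i z - ⟨c, hc, w, hw⟩
  obtain ⟨A, hA⟩ := hgraded i
  set L := Matrix.toLin' (A.map (C : ℂ →+* ℂ⟦X⟧))
  have hcz : c • z ∈ LinearMap.range L := ⟨X • w, by rw [← hw, hA, map_smul]; rfl⟩
  have hfactor : c = X ^ c.order.toNat * divXPowOrder c := X_pow_order_mul_divXPowOrder.symm
  rw [hfactor, mul_comm, mul_smul,
    Submodule.smul_mem_iff_of_isUnit _ (isUnit_divided_by_X_pow_order hc)] at hcz
  obtain ⟨v, hv⟩ := mem_range_toLin'_map_C_of_X_pow_smul_mem hcz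
  exact ⟨v, by rw [hA, LinearMap.smul_apply, hv]⟩

/-- Let `C•` be a complex of finitely generated free graded `ℂ[[s]]`-modules generated in
degree zero (so `C i = ℂ[[s]]^{n i}` with basis in degree `0` and `deg s = 1`), whose
differentials are graded of degree `+1`, i.e. each differential equals `s` times a matrix
with constant (scalar) entries. Then the torsion of each cohomology module is annihilated
by `s`: in degree `i+1`, any cocycle `z` which is torsion modulo coboundaries satisfies
`s • z ∈ im`. -/
theorem graded_degree_one_complex_semisimple_cohomology
    (n : ℤ → ℕ)
    (d : ∀ i : ℤ, (Fin (n i) → PowerSeries ℂ) →ₗ[PowerSeries ℂ] (Fin (n (i + 1)) → PowerSeries ℂ))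
    (hgraded : ∀ i : ℤ, ∃ A : Matrix (Fin (n (i + 1))) (Fin (n i)) ℂ,
      d i = (PowerSeries.X : PowerSeries ℂ) • Matrix.toLin' (A.map (PowerSeries.C : ℂ →+* PowerSeries ℂ)))
    (hd : ∀ i : ℤ, (d (i + 1)).comp (d i) = 0) :
    ∀ i : ℤ, ∀ z ∈ LinearMap.ker (d (i + 1)),
      (∃ c : PowerSeries ℂ, c ≠ 0 ∧ c • z ∈ LinearMap.range (d i)) →
        (PowerSeries.X : PowerSeries ℂ) • z ∈ LinearMap.range (d i) :=
  graded_degree_one_complex_semisimple_cohomology_general n d hgraded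
end

section
/- Let (E_r^{p,q}) be a first-quadrant-type spectral sequence of finitely generated ℂ[[s]]-modules degenerating at the E³ page, with E³ page modules all annihilated by s, converging to modules H_i carrying a finite filtration whose graded pieces are the E³ terms with p + q = i, where E³^{p,q} = 0 unless 0 ≤ p, 0 ≤ q, and p + 2q ≤ 2n. Then for each i, the torsion of H_i is annihilated by s^{min(i+1, 2n−i+1)}. -/
/-- Abstract spectral sequence bound: suppose `H` (playing the role of the abutment `H_i`
of a spectral sequence of finitely generated `ℂ[[s]]`-modules degenerating at `E³`) carries
a finite filtration `⊥ = F 0 ⊆ F 1 ⊆ ⋯ ⊆ F (i+1) = ⊤` indexed by `p = 0, …, i` (with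
`q = i - p`), whose graded pieces (the `E³` terms) are annihilated by `s`
(`s • F (p+1) ⊆ F p`), and which collapses (`F (p+1) = F p`) whenever the corresponding
`E³` term vanishes because `p + 2q > 2n`, i.e. `2i > 2n + p`. Then the torsion of `H` is
annihilated by `s^{min(i+1, 2n-i+1)}`. -/
theorem spectral_sequence_filtration_bound
    (n i : ℕ) (H : Type) [AddCommGroup H] [Module (PowerSeries ℂ) H]
    [Module.Finite (PowerSeries ℂ) H]
    (F : ℕ → Submodule (PowerSeries ℂ) H)
    (hmono : Monotone F) (h0 : F 0 = ⊥) (htop : F (i + 1) = ⊤)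
    (hstep : ∀ p, ∀ x ∈ F (p + 1), (PowerSeries.X : PowerSeries ℂ) • x ∈ F p)
    (hvanish : ∀ p ≤ i, 2 * i > 2 * n + p → F (p + 1) = F p) :
    ∀ x ∈ Submodule.torsion (PowerSeries ℂ) H,
      ((PowerSeries.X : PowerSeries ℂ) ^ (min (i + 1) (2 * n - i + 1))) • x = 0 := by
  intro x hx
  have step : ∀ m j, ∀ y ∈ F (j + m),
      ((PowerSeries.X : PowerSeries ℂ) ^ m) • y ∈ F j := by
    intro m
    induction m with
    | zero => intro j y hy; simpa using hy
    | succ m ih =>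
      intro j y hy
      rw [pow_succ, mul_smul]
      exact ih j _ (hstep (j + m) y hy)
  have bot : ∀ j, j ≤ i + 1 → j ≤ 2 * i - 2 * n → F j = ⊥ := by
    intro j
    induction j with
    | zero => intro _ _; exact h0
    | succ j ih =>
      intro h1 h2
      rw [hvanish j (by omega) (by omega)]
      exact ih (by omega) (by omega)
  set m := min (i + 1) (2 * n - i + 1) with hm
  have hj : i + 1 - m + m = i + 1 := by omega
  have hx' : x ∈ F (i + 1 - m + m) := by rw [hj, htop]; trivial
  have h := step m (i + 1 - m) x hx'
  rw [bot (i + 1 - m) (by omega) (by omega)] at h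
  simpa using h
end
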